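/- There exists an infinite canonically immune set; specifically, if (x_i) is a strictly increasing sequence such that x_i lies outside the union of all canonical finite sets D_r(e) with r,e < i appropriately diagonalized, then R = {x_i : i ∈ ℕ} is canonically immune with witness h(e) = e + 1. -/

import Mathlib

/-- The list of the first `n` values of `g`. -/
def funToList (g : ℕ → ℕ) (n : ℕ) : List ℕ := (List.range n).map g

open Classical in
/-- Characteristic (partial) function of a set of naturals, used as an oracle. -/
noncomputable def chi (A : Set ℕ) : ℕ →. ℕ := fun n => Part.some (if n ∈ A then 1 else 0)

/-- A total function regarded as a partial oracle. -/
def totalize (g : ℕ → ℕ) : ℕ →. ℕ := fun n => Part.some (g n)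

/-- Codes for oracle Turing machines (partial recursive functionals). -/
inductive OCode : Type
  | zero | succ | left | right | oracle
  | pair (a b : OCode) | comp (a b : OCode) | prec (a b : OCode) | rfind' (a : OCode)

/-- Evaluation of an oracle code with oracle `g`. -/
def OCode.eval (g : ℕ →. ℕ) : OCode → ℕ →. ℕ
  | .zero => pure 0
  | .succ => fun n => Part.some (n + 1)
  | .left => fun n => Part.some (Nat.unpair n).1
  | .right => fun n => Part.some (Nat.unpair n).2
  | .oracle => g
  | .pair a b => fun n => Nat.pair <$> OCode.eval g a n <*> OCode.eval g b n
  | .comp a b => fun n => OCode.eval g b n >>= OCode.eval g a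
  | .prec a b =>
      Nat.unpaired fun m n =>
        n.rec (OCode.eval g a m) fun y IH => do
          let i ← IH
          OCode.eval g b (Nat.pair m (Nat.pair y i))
  | .rfind' a =>
      Nat.unpaired fun m n =>
        (Nat.rfind fun k => (fun x => x = 0) <$> OCode.eval g a (Nat.pair m (k + n))).map (· + n)

/-- A surjective numbering of oracle codes. -/
def OCode.ofNat : ℕ → OCode
  | 0 => .zero
  | 1 => .succ
  | 2 => .left
  | 3 => .right
  | 4 => .oracle
  | n + 5 =>
    let m := n.div2.div2
    have hm : m < n + 5 := by
      simp only [m, Nat.div2_val]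
      exact lt_of_le_of_lt (le_trans (Nat.div_le_self _ _) (Nat.div_le_self _ _)) (by omega)
    have _m1 : m.unpair.1 < n + 5 := lt_of_le_of_lt m.unpair_left_le hm
    have _m2 : m.unpair.2 < n + 5 := lt_of_le_of_lt m.unpair_right_le hm
    match n.bodd, n.div2.bodd with
    | false, false => .pair (OCode.ofNat m.unpair.1) (OCode.ofNat m.unpair.2)
    | false, true  => .comp (OCode.ofNat m.unpair.1) (OCode.ofNat m.unpair.2)
    | true , false => .prec (OCode.ofNat m.unpair.1) (OCode.ofNat m.unpair.2)
    | true , true  => .rfind' (OCode.ofNat m)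
decreasing_by
  all_goals
    try simp_wf
    have h1 := Nat.unpair_left_le n.div2.div2
    have h2 := Nat.unpair_right_le n.div2.div2
    have h3 : n.div2.div2 ≤ n := by
      simp only [Nat.div2_val]; exact le_trans (Nat.div_le_self _ _) (Nat.div_le_self _ _)
    omega

/-- `{e}^g`, the `e`-th oracle machine with oracle `g`. -/
def OEval (e : ℕ) (g : ℕ →. ℕ) : ℕ →. ℕ := (OCode.ofNat e).eval g

/-- `{e}`, the `e`-th (ordinary) partial recursive function. -/
def phi (e : ℕ) : ℕ →. ℕ := (Denumerable.ofNat Nat.Partrec.Code e).eval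

/-- `W_e`, the `e`-th computably enumerable set. -/
def We (e : ℕ) : Set ℕ := {n | (phi e n).Dom}

/-- `A` is computably enumerable. -/
def CE (A : Set ℕ) : Prop := ∃ e : ℕ, A = We e

/-- `A` is Δ⁰₂ (limit computable). -/
def Delta02 (A : Set ℕ) : Prop :=
  ∃ F : ℕ → ℕ → Bool, Computable₂ F ∧ ∀ x, ∃ N, ∀ s ≥ N, (F s x = true ↔ x ∈ A)

/-- Π⁰₂ subsets of ℕ. -/
def Pi2 (S : Set ℕ) : Prop :=
  ∃ R : ℕ × ℕ × ℕ → Bool, Computable R ∧ S = {e | ∀ a, ∃ b, R (e, a, b) = true}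

/-- Π⁰₃ subsets of ℕ. -/
def Pi3 (S : Set ℕ) : Prop :=
  ∃ R : ℕ × ℕ × ℕ × ℕ → Bool, Computable R ∧ S = {e | ∀ a, ∃ b, ∀ c, R (e, a, b, c) = true}

/-- Π⁰₄ subsets of ℕ. -/
def Pi4 (S : Set ℕ) : Prop :=
  ∃ R : ℕ × ℕ × ℕ × ℕ × ℕ → Bool, Computable R ∧
    S = {e | ∀ a, ∃ b, ∀ c, ∃ d, R (e, a, b, c, d) = true}

/-- Π¹₁ subsets of ℕ (Kleene normal form). -/
def Pi11 (S : Set ℕ) : Prop :=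
  ∃ R : ℕ × List ℕ → Bool, Computable R ∧
    S = {e | ∀ f : ℕ → ℕ, ∃ n, R (e, funToList f n) = true}

/-- Many-one reducibility. -/
def ManyOneRed (T S : Set ℕ) : Prop := ∃ h : ℕ → ℕ, Computable h ∧ ∀ e, e ∈ T ↔ h e ∈ S

def Pi2Complete (S : Set ℕ) : Prop := Pi2 S ∧ ∀ T, Pi2 T → ManyOneRed T S
def Pi3Complete (S : Set ℕ) : Prop := Pi3 S ∧ ∀ T, Pi3 T → ManyOneRed T S
def Pi4Complete (S : Set ℕ) : Prop := Pi4 S ∧ ∀ T, Pi4 T → ManyOneRed T S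
def Pi11Complete (S : Set ℕ) : Prop := Pi11 S ∧ ∀ T, Pi11 T → ManyOneRed T S

/-- `g` is an `n`-bounded diagonally non-computable function. -/
def DNCb (n : ℕ) (g : ℕ → ℕ) : Prop := (∀ x, g x < n) ∧ ∀ x y, y ∈ phi x x → g x ≠ y

/-- `g` is diagonally non-computable. -/
def DNCfun (g : ℕ → ℕ) : Prop := ∀ x y, y ∈ phi x x → g x ≠ y

/-- `A` is immune: infinite with no infinite c.e. subset. -/
def Immune (A : Set ℕ) : Prop := A.Infinite ∧ ∀ B, CE B → B.Infinite → ¬B ⊆ A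

/-- `A` is bi-immune. -/
def BiImmune (A : Set ℕ) : Prop := Immune A ∧ Immune Aᶜ

/-- `f` is strongly non-recursive. -/
def SNR (f : ℕ → ℕ) : Prop :=
  ∀ h : ℕ → ℕ, Computable h → ∀ᶠ n in Filter.atTop, f n ≠ h n

/-- A canonical numbering of all finite sets (presented as lists). -/
def CanonicalNumbering (H : ℕ → List ℕ) : Prop :=
  Computable H ∧ ∀ S : Finset ℕ, ∃ e, (H e).toFinset = S

/-- `R` is canonically immune. -/
def CanonImmune (R : Set ℕ) : Prop :=
  R.Infinite ∧ ∃ h : ℕ → ℕ, Computable h ∧ ∀ H, CanonicalNumbering H →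
    ∀ᶠ e in Filter.atTop, (∀ x ∈ H e, x ∈ R) → (H e).toFinset.card ≤ h e

/-- A Medvedev reduction of `F` (class of total functions) to `G` (class of partial oracles):
a single code `e` such that `{e}^g` is total and in `F` for every `g ∈ G`. -/
def MedvedevRed (F : Set (ℕ → ℕ)) (G : Set (ℕ →. ℕ)) : Prop :=
  ∃ e : ℕ, ∀ g ∈ G, ∃ f ∈ F, ∀ x, OEval e g x = Part.some (f x)

/-- The set `G[F]` of `G`-universal `F`-codes, for classes of partial oracles `G`
and total functions `F`. -/
def UnivCodes (G : Set (ℕ →. ℕ)) (F : Set (ℕ → ℕ)) : Set ℕ :=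
  {e | ∀ g ∈ G, ∃ f ∈ F, ∀ x, OEval e g x = Part.some (f x)}

/-- The set `G[F]` with total oracles. -/
def UnivCodesT (G : Set (ℕ → ℕ)) (F : Set (ℕ → ℕ)) : Set ℕ :=
  {e | ∀ g ∈ G, ∃ f ∈ F, ∀ x, OEval e (totalize g) x = Part.some (f x)}

open Classical in
noncomputable def UnivCodesSet (A : Set (ℕ → ℕ)) (B : Set (Set ℕ)) : Set ℕ :=
  {e | ∀ Y ∈ A, ∃ S ∈ B, ∀ x, OEval e (totalize Y) x = Part.some (if x ∈ S then 1 else 0)}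

/-- Π¹₁ classes of functions. -/
def Pi11Fun (C : Set (ℕ → ℕ)) : Prop :=
  ∃ R : List ℕ × List ℕ → Bool, Computable R ∧
    C = {f | ∀ g : ℕ → ℕ, ∃ n, R (funToList f n, funToList g n) = true}

/-- Σ¹₁ classes of functions. -/
def Sigma11Fun (C : Set (ℕ → ℕ)) : Prop :=
  ∃ R : List ℕ × List ℕ → Bool, Computable R ∧
    C = {f | ∃ g : ℕ → ℕ, ∀ n, R (funToList f n, funToList g n) = true}

/-- Hyperarithmetic (Δ¹₁) classes of functions. -/
def Hyp (C : Set (ℕ → ℕ)) : Prop := Pi11Fun C ∧ Sigma11Fun C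

/-- Hyperarithmetic classes of sets, via characteristic functions. -/
def HypSet (C : Set (Set ℕ)) : Prop :=
  Hyp {f | (∀ n, f n ≤ 1) ∧ {n | f n = 1} ∈ C}

/-- `B` is a tail set: closed under finite modifications. -/
def TailSet (B : Set (Set ℕ)) : Prop :=
  ∀ S T : Set ℕ, (S \ T ∪ T \ S).Finite → S ∈ B → T ∈ B

/-- Proper extension of finite strings. -/
def StrictPrefix (α β : List ℕ) : Prop := α <+: β ∧ α ≠ β

/-- A `Δ⁰₂` embedding of Baire space, given by a uniformly computable sequence of
`≺`-isomorphisms on finite strings converging pointwise to `fstar`, inducing `toFun`. -/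
structure Delta02Embedding where
  fs : ℕ → List ℕ → List ℕ
  fstar : List ℕ → List ℕ
  toFun : (ℕ → ℕ) → (ℕ → ℕ)
  computable : Computable₂ fs
  iso : ∀ s α β, StrictPrefix α β ↔ StrictPrefix (fs s α) (fs s β)
  limit : ∀ α, ∃ N, ∀ s ≥ N, fs s α = fstar α
  union : ∀ X n, fstar (funToList X n) = funToList (toFun X) (fstar (funToList X n)).length
  unbounded : ∀ X k, ∃ n, k ≤ (fstar (funToList X n)).length

/-- Π⁰₂ classes of functions. -/
def Pi02Class (P : Set (ℕ → ℕ)) : Prop :=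
  ∃ h : ℕ → ℕ → List ℕ, Computable₂ h ∧
    P = {X | ∀ n, ∃ s, h n s = funToList X (h n s).length}

/-- `{e}` is total. -/
def TotCode (e : ℕ) : Prop := ∀ i, (phi e i).Dom

/-- The computable tree coded by `e`: the downward closure of `{ρ_i : {e}(i) = 1}`. -/
def TreeOf (e : ℕ) : Set (List ℕ) :=
  {σ | ∃ τ : List ℕ, σ <+: τ ∧ ∃ i : ℕ, Denumerable.ofNat (List ℕ) i = τ ∧ 1 ∈ phi e i}

/-- Codes of total functions whose coded tree has no infinite branch. -/
def NoPath : Set ℕ :=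
  {e | TotCode e ∧ ¬∃ X : ℕ → ℕ, ∀ n, funToList X n ∈ TreeOf e}

/-!
Enumerate the countably many computable functions `ℕ → List ℕ` as `f 0, f 1, …` and choose a
strictly increasing sequence `x` whose `j`-th term avoids every set `f k e` with `k, e ≤ j`.
For the `k`-th numbering and `e ≥ k`, an element `x j` of `f k e` must then have `j ≤ e`, so
if `f k e ⊆ {x j}` it has at most `e + 1` elements.
-/

instance Computable.countable {α σ : Type*} [Primcodable α] [Primcodable σ] :
    Countable {f : α → σ // Computable f} := by
  let code (f : {f : α → σ // Computable f}) : {g : ℕ → ℕ // Computable g} :=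
    ⟨fun n => Encodable.encode ((Encodable.decode (α := α) n).map f.1),
      Computable.encode.comp (Computable.option_map Computable.decode (f.2.comp Computable.snd))⟩
  refine Function.Injective.countable (f := code) fun f g hfg => Subtype.ext (funext fun a => ?_)
  have := congrFun (congrArg Subtype.val hfg) (Encodable.encode a)
  simpa [code] using this

lemma exists_strictMono_forall_notMem (F : ℕ → Finset ℕ) :
    ∃ x : ℕ → ℕ, StrictMono x ∧ ∀ j, x j ∉ F j := by
  set b : ℕ → ℕ := fun i => (F i).sup id + 1
  refine ⟨fun j => ∑ i ∈ Finset.range (j + 1), b i, ?_, fun j hj => ?_⟩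
  · refine strictMono_nat_of_lt_succ fun j => ?_
    rw [Finset.sum_range_succ _ (j + 1)]
    exact Nat.lt_add_of_pos_right (Nat.succ_pos _)
  · have hle : (F j).sup id < ∑ i ∈ Finset.range (j + 1), b i :=
      Nat.lt_of_succ_le (Finset.single_le_sum (f := b) (fun _ _ => Nat.zero_le _)
        (Finset.self_mem_range_succ j))
    exact absurd (Finset.le_sup (f := id) hj) (not_le.2 hle)

lemma Finset.card_le_succ_of_subset_range {x : ℕ → ℕ} {s : Finset ℕ} {e : ℕ}
    (havoid : ∀ j, e < j → x j ∉ s) (hs : (s : Set ℕ) ⊆ Set.range x) : s.card ≤ e + 1 := by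
  have hsub : s ⊆ (Finset.range (e + 1)).image x := by
    intro y hy
    obtain ⟨j, rfl⟩ := hs hy
    exact Finset.mem_image_of_mem x (Finset.mem_range_succ_iff.2 (not_lt.1 fun hj => havoid j hj hy))
  calc s.card ≤ ((Finset.range (e + 1)).image x).card := Finset.card_le_card hsub
    _ ≤ e + 1 := Finset.card_image_le.trans (Finset.card_range _).le

lemma exists_strictMono_eventually_card_le (s : ℕ → ℕ → Finset ℕ) :
    ∃ x : ℕ → ℕ, StrictMono x ∧ ∀ k, ∀ᶠ e in Filter.atTop,
      (s k e : Set ℕ) ⊆ Set.range x → (s k e).card ≤ e + 1 := by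
  obtain ⟨x, hx, havoid⟩ := exists_strictMono_forall_notMem fun j =>
    (Finset.range (j + 1) ×ˢ Finset.range (j + 1)).biUnion fun p => s p.1 p.2
  refine ⟨x, hx, fun k => Filter.eventually_atTop.2 ⟨k, fun e hke => ?_⟩⟩
  refine Finset.card_le_succ_of_subset_range fun j hej hj => havoid j ?_
  exact Finset.mem_biUnion.2 ⟨(k, e), by simp only [Finset.mem_product, Finset.mem_range]; omega, hj⟩

/-- there is an infinite canonically immune set, with witness h(e) = e + 1. -/
theorem exists_canonically_immune :
    ∃ R : Set ℕ, R.Infinite ∧ ∀ H : ℕ → List ℕ, CanonicalNumbering H →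
      ∀ᶠ e in Filter.atTop, (∀ x ∈ H e, x ∈ R) → (H e).toFinset.card ≤ e + 1 := by
  obtain ⟨f, hf⟩ : ∃ f : ℕ → ℕ → List ℕ, {H | Computable H} = Set.range f :=
    (Set.countable_coe_iff.1 Computable.countable).exists_eq_range ⟨_, Computable.const []⟩
  obtain ⟨x, hx, hcard⟩ := exists_strictMono_eventually_card_le fun k e => (f k e).toFinset
  refine ⟨Set.range x, Set.infinite_range_of_injective hx.injective, fun H hH => ?_⟩
  obtain ⟨k, rfl⟩ : H ∈ Set.range f := hf ▸ hH.1
  filter_upwards [hcard k] with e he hsub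
  exact he fun y hy => hsub y (List.mem_toFinset.1 hy)
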